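/- arXiv:math/0605452 — 3 statements merged into one kernel-verified Lean document; each statement's English description precedes it below -/
import Mathlib

section
/- Let P satisfy Assumption (A) with constants ρ ∈ (0,1), C0 < ∞ and function V. Then there exists a constant C ∈ (0,∞) such that for every k ≥ 1 and every n with a_k ≤ n < a_{k+1}, the law L^(n) of the chain with resampling from the past satisfies ⦀L^(n) − π⦀_V ≤ C ρ^{n−a_k} exp(−δ_k). -/
/-
By (A), the chain started at `δ_x` is within `C0 V(x) ρ^N` of `π` in `V`-norm after `N` steps.
Such a geometric bound, required at all later times `N`, passes from `μ` to `μP` with the constant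
multiplied by `ρ`, and from measures `μ_j` to their average with the constants averaged. Hence
`L^(n)(x,·)` is within `C0 V(x) W_n` of `π`, where `W_n` obeys the recursion of `L^(n)` with `P`
replaced by multiplication by `ρ`. Between resampling times `W` decays like `ρ`, so the block
`[a_k, a_{k+1})` contributes at most `c W_{a_k}` to the sum, and averaging gives
`a_{k+1} W_{a_{k+1}} ≤ (a_k + c) W_{a_k}`, that is, `W_{a_{k+1}} ≤ e^{-u_{k+1}} W_{a_k}`;
with `W_{a_1} ≤ c / a_1 = c/(a_1 ρ^{a_1}) e^{-u_1}` this gives `W_{a_k} ≤ c/(a_1 ρ^{a_1}) e^{-δ_k}`.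
-/

open MeasureTheory Filter
open scoped ENNReal

namespace ResamplingFromThePast

variable {X : Type*} [MeasurableSpace X]

/-- `iter P n` is the `n`-step transition kernel `P^n` (acting on points, producing measures),
with `P^0(x,·) = δ_x` and `P^{n+1}(x,·) = ∫ P^n(x,dy) P(y,·)`. -/
noncomputable def iter (P : X → Measure X) : ℕ → X → Measure X
  | 0 => fun x => Measure.dirac x
  | n + 1 => fun x => (iter P n x).bind P

/-- `u ρ a 1 = -a₁ log ρ` and `u ρ a k = log (a_k) - log (1/(1-ρ) + a_{k-1})` for `k ≥ 2`,
where `c = 1/(1-ρ)`. -/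
noncomputable def u (ρ : ℝ) (a : ℕ → ℕ) : ℕ → ℝ
  | 0 => 0
  | 1 => -(a 1 : ℝ) * Real.log ρ
  | k + 2 => Real.log (a (k + 2) : ℝ) - Real.log (1 / (1 - ρ) + (a (k + 1) : ℝ))

/-- `δ_k = Σ_{j=1}^k u_j`. -/
noncomputable def delta (ρ : ℝ) (a : ℕ → ℕ) (k : ℕ) : ℝ :=
  ∑ j ∈ Finset.Icc 1 k, u ρ a j

section Schedule

variable {ρ : ℝ} {a : ℕ → ℕ}

def IsResamplingTime (a : ℕ → ℕ) (n : ℕ) : Prop := ∃ k, 1 ≤ k ∧ a k = n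

lemma schedule_strictMonoOn (ha : ∀ k, 1 ≤ k → a k < a (k + 1)) : StrictMonoOn a (Set.Ici 1) :=
  strictMonoOn_of_lt_add_one Set.ordConnected_Ici fun k _ hk _ ↦ ha k hk

lemma not_isResamplingTime_of_lt (ha : ∀ k, 1 ≤ k → a k < a (k + 1)) {i : ℕ} (hi : i < a 1) :
    ¬IsResamplingTime a i := by
  rintro ⟨j, hj, rfl⟩
  exact hi.not_ge ((schedule_strictMonoOn ha).monotoneOn (Set.mem_Ici.2 le_rfl) hj hj)

lemma not_isResamplingTime_of_lt_of_lt (ha : ∀ k, 1 ≤ k → a k < a (k + 1)) {k i : ℕ}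
    (hk : 1 ≤ k) (h₁ : a k < i) (h₂ : i < a (k + 1)) : ¬IsResamplingTime a i := by
  rintro ⟨j, hj, rfl⟩
  have hmono := schedule_strictMonoOn ha
  have : k < j := (hmono.lt_iff_lt hk hj).1 h₁
  have : j < k + 1 := (hmono.lt_iff_lt hj (Set.mem_Ici.2 (by omega))).1 h₂
  omega

lemma schedule_pos (ha : ∀ k, 1 ≤ k → a k < a (k + 1)) (ha₁ : 1 ≤ a 1) {k : ℕ} (hk : 1 ≤ k) :
    0 < a k :=
  ha₁.trans ((schedule_strictMonoOn ha).monotoneOn (Set.mem_Ici.2 le_rfl) hk hk)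

lemma exp_neg_delta_one (hρ : 0 < ρ) : Real.exp (-delta ρ a 1) = ρ ^ a 1 := by
  rw [delta, Finset.Icc_self, Finset.sum_singleton, u, neg_mul, neg_neg, Real.exp_nat_mul,
    Real.exp_log hρ]

lemma exp_neg_delta_succ (hρ : ρ < 1) {k : ℕ} (hk : 1 ≤ k) (ha : 0 < a (k + 1)) :
    Real.exp (-delta ρ a (k + 1)) = (1 / (1 - ρ) + a k) / a (k + 1) * Real.exp (-delta ρ a k) := by
  obtain ⟨j, rfl⟩ := Nat.exists_eq_add_of_le' hk
  have hc : 0 < 1 / (1 - ρ) + a (j + 1) := by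
    have : 0 < 1 - ρ := by linarith
    positivity
  rw [delta, Finset.sum_Icc_succ_top (by omega), ← delta, u, neg_add, Real.exp_add, neg_sub,
    Real.exp_sub, Real.exp_log hc, Real.exp_log (by exact_mod_cast ha), mul_comm]

end Schedule

section ErrorFactor

variable (ρ : ℝ) (a : ℕ → ℕ)

/-- The recursion of `L^(n)` with `P` replaced by multiplication by `ρ`. -/
noncomputable def errorFactor : ℕ → ℝ
  | 0 => 1
  | n + 1 =>
    open Classical in
    if IsResamplingTime a (n + 1) then (∑ j : Fin (n + 1), errorFactor j) / (n + 1)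
    else ρ * errorFactor n

@[simp] lemma errorFactor_zero : errorFactor ρ a 0 = 1 := by
  rw [errorFactor]

variable {ρ a}

lemma errorFactor_succ_of_isResamplingTime {n : ℕ} (h : IsResamplingTime a (n + 1)) :
    errorFactor ρ a (n + 1) = (∑ j ∈ Finset.range (n + 1), errorFactor ρ a j) / (n + 1) := by
  rw [errorFactor, if_pos h, Fin.sum_univ_eq_sum_range (errorFactor ρ a)]

lemma errorFactor_succ_of_not_isResamplingTime {n : ℕ} (h : ¬IsResamplingTime a (n + 1)) :
    errorFactor ρ a (n + 1) = ρ * errorFactor ρ a n := by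
  rw [errorFactor, if_neg h]

lemma errorFactor_nonneg (hρ : 0 ≤ ρ) (n : ℕ) : 0 ≤ errorFactor ρ a n := by
  induction n using Nat.strong_induction_on with
  | _ n ih =>
    rcases n with _ | n
    · simp
    by_cases h : IsResamplingTime a (n + 1)
    · rw [errorFactor_succ_of_isResamplingTime h]
      exact div_nonneg (Finset.sum_nonneg fun j hj ↦ ih j (by simpa using hj)) (by positivity)
    · rw [errorFactor_succ_of_not_isResamplingTime h]
      exact mul_nonneg hρ (ih n n.lt_succ_self)

lemma mul_errorFactor_of_isResamplingTime {n : ℕ} (h : IsResamplingTime a n) (hn : n ≠ 0) :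
    n * errorFactor ρ a n = ∑ j ∈ Finset.range n, errorFactor ρ a j := by
  obtain ⟨m, rfl⟩ := Nat.exists_eq_succ_of_ne_zero hn
  rw [errorFactor_succ_of_isResamplingTime h]
  push_cast
  field_simp

lemma errorFactor_add_eq_pow_mul {m d : ℕ} (h : ∀ i, m < i → i ≤ m + d → ¬IsResamplingTime a i) :
    errorFactor ρ a (m + d) = ρ ^ d * errorFactor ρ a m := by
  induction d with
  | zero => simp
  | succ d ih =>
    have hstep := errorFactor_succ_of_not_isResamplingTime (ρ := ρ)
      (h (m + d + 1) (by omega) (by omega))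
    rw [← add_assoc, hstep, ih fun i h₁ h₂ ↦ h i h₁ (by omega), pow_succ]
    ring

lemma sum_errorFactor_add_le (hρ₀ : 0 ≤ ρ) (hρ₁ : ρ < 1) {m d : ℕ}
    (h : ∀ i, m < i → i < m + d → ¬IsResamplingTime a i) :
    ∑ i ∈ Finset.range d, errorFactor ρ a (m + i) ≤ 1 / (1 - ρ) * errorFactor ρ a m := by
  have hblock : ∀ i ∈ Finset.range d, errorFactor ρ a (m + i) = ρ ^ i * errorFactor ρ a m :=
    fun i hi ↦ errorFactor_add_eq_pow_mul fun j h₁ h₂ ↦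
      h j h₁ (by simp only [Finset.mem_range] at hi; omega)
  have hgeom := geom_sum_Ico_le_of_lt_one (m := 0) (n := d) hρ₀ hρ₁
  rw [← Finset.range_eq_Ico, pow_zero] at hgeom
  rw [Finset.sum_congr rfl hblock, ← Finset.sum_mul]
  exact mul_le_mul_of_nonneg_right hgeom (errorFactor_nonneg hρ₀ m)

lemma errorFactor_a_one_le (hρ₀ : 0 ≤ ρ) (hρ₁ : ρ < 1) (ha : ∀ k, 1 ≤ k → a k < a (k + 1))
    (ha₁ : 1 ≤ a 1) : errorFactor ρ a (a 1) ≤ 1 / (1 - ρ) / a 1 := by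
  have hsum := sum_errorFactor_add_le (ρ := ρ) (m := 0) (d := a 1) hρ₀ hρ₁
    fun i _ hi ↦ not_isResamplingTime_of_lt ha (by omega)
  simp only [zero_add, errorFactor_zero, mul_one] at hsum
  rw [← mul_errorFactor_of_isResamplingTime ⟨1, le_rfl, rfl⟩ (by omega)] at hsum
  rw [le_div_iff₀ (by exact_mod_cast ha₁), mul_comm]
  exact hsum

lemma errorFactor_a_succ_le (hρ₀ : 0 ≤ ρ) (hρ₁ : ρ < 1) (ha : ∀ k, 1 ≤ k → a k < a (k + 1))
    (ha₁ : 1 ≤ a 1) {k : ℕ} (hk : 1 ≤ k) :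
    errorFactor ρ a (a (k + 1)) ≤ (1 / (1 - ρ) + a k) / a (k + 1) * errorFactor ρ a (a k) := by
  obtain ⟨d, hd⟩ := Nat.exists_eq_add_of_le (ha k hk).le
  have hpos : 0 < a (k + 1) := (Nat.zero_le _).trans_lt (ha k hk)
  have hsplit := mul_errorFactor_of_isResamplingTime (ρ := ρ) ⟨k + 1, by omega, rfl⟩ hpos.ne'
  rw [hd, Finset.sum_range_add, ← hd, ← mul_errorFactor_of_isResamplingTime ⟨k, hk, rfl⟩
    (schedule_pos ha ha₁ hk).ne'] at hsplit
  have htail := sum_errorFactor_add_le (ρ := ρ) (m := a k) (d := d) hρ₀ hρ₁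
    fun i h₁ h₂ ↦ not_isResamplingTime_of_lt_of_lt ha hk h₁ (by omega)
  rw [div_mul_eq_mul_div, le_div_iff₀ (by exact_mod_cast hpos), mul_comm, hsplit]
  linarith

lemma errorFactor_a_le (hρ₀ : 0 < ρ) (hρ₁ : ρ < 1) (ha : ∀ k, 1 ≤ k → a k < a (k + 1))
    (ha₁ : 1 ≤ a 1) {k : ℕ} (hk : 1 ≤ k) :
    errorFactor ρ a (a k) ≤ 1 / (1 - ρ) / (a 1 * ρ ^ a 1) * Real.exp (-delta ρ a k) := by
  induction k, hk using Nat.le_induction with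
  | base =>
    rw [exp_neg_delta_one hρ₀, div_mul_eq_mul_div, mul_div_mul_right _ _ (by positivity)]
    exact errorFactor_a_one_le hρ₀.le hρ₁ ha ha₁
  | succ k hk ih =>
    have hfactor : 0 ≤ (1 / (1 - ρ) + a k) / a (k + 1) := by
      have : 0 < 1 - ρ := by linarith
      positivity
    rw [exp_neg_delta_succ hρ₁ hk (schedule_pos ha ha₁ (by omega)), mul_left_comm]
    exact (errorFactor_a_succ_le hρ₀.le hρ₁ ha ha₁ hk).trans
      (mul_le_mul_of_nonneg_left ih hfactor)

end ErrorFactor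


lemma integrable_of_integral_min_abs_le {α : Type*} [MeasurableSpace α] {μ : Measure α}
    [IsFiniteMeasure μ] {f : α → ℝ} (hf : Measurable f) {B : ℝ}
    (hB : ∀ n : ℕ, ∫ x, min |f x| n ∂μ ≤ B) : Integrable f μ := by
  have htrunc_meas : ∀ n : ℕ, Measurable fun x ↦ min |f x| n :=
    fun n ↦ hf.abs.min measurable_const
  have htrunc_nonneg : ∀ (n : ℕ) x, 0 ≤ min |f x| n :=
    fun n x ↦ le_min (abs_nonneg _) n.cast_nonneg
  have htrunc : ∀ n : ℕ, Integrable (fun x ↦ min |f x| n) μ := fun n ↦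
    (integrable_const (n : ℝ)).mono' (htrunc_meas n).aestronglyMeasurable
      (ae_of_all _ fun x ↦ by
        rw [Real.norm_of_nonneg (htrunc_nonneg n x)]
        exact min_le_right _ _)
  have hsup : ∀ x, ⨆ n : ℕ, ENNReal.ofReal (min |f x| n) = ‖f x‖ₑ := by
    intro x
    rw [Real.enorm_eq_ofReal_abs]
    refine le_antisymm (iSup_le fun n ↦ ENNReal.ofReal_le_ofReal (min_le_left _ _)) ?_
    exact le_iSup_of_le ⌈|f x|⌉₊ (by rw [min_eq_left (Nat.le_ceil _)])
  refine ⟨hf.aestronglyMeasurable, ?_⟩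
  calc ∫⁻ x, ‖f x‖ₑ ∂μ = ⨆ n : ℕ, ∫⁻ x, ENNReal.ofReal (min |f x| n) ∂μ := by
        simp_rw [← hsup]
        exact lintegral_iSup (fun n ↦ (htrunc_meas n).ennreal_ofReal)
          fun i j hij x ↦ ENNReal.ofReal_le_ofReal (min_le_min_left _ (by exact_mod_cast hij))
    _ ≤ ENNReal.ofReal B := iSup_le fun n ↦ by
        rw [← ofReal_integral_eq_lintegral_ofReal (htrunc n) (ae_of_all _ (htrunc_nonneg n))]
        exact ENNReal.ofReal_le_ofReal (hB n)
    _ < ⊤ := ENNReal.ofReal_lt_top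

lemma Measure.bind_finsetSum {α β ι : Type*} [MeasurableSpace α] [MeasurableSpace β]
    {f : α → Measure β} (hf : Measurable f) (s : Finset ι) (μ : ι → Measure α) :
    (∑ i ∈ s, μ i).bind f = ∑ i ∈ s, (μ i).bind f := by
  ext t ht
  simp only [Measure.bind_apply ht hf.aemeasurable, Measure.finsetSum_apply,
    lintegral_finsetSum_measure]

section Chain

variable {P : X → Measure X} {π : Measure X} {V : X → ℝ} {ρ : ℝ}

lemma iterate_bind_smul_sum {ι : Type*} (hP : Measurable P) (c : ℝ≥0∞) (s : Finset ι)
    (μ : ι → Measure X) (N : ℕ) :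
    (·.bind P)^[N] (c • ∑ i ∈ s, μ i) = c • ∑ i ∈ s, (·.bind P)^[N] (μ i) := by
  induction N with
  | zero => rfl
  | succ N ih =>
    simp only [Function.iterate_succ_apply', ih, Measure.bind_smul,
      Measure.bind_finsetSum hP]

lemma iterate_bind_dirac (P : X → Measure X) (x : X) (N : ℕ) :
    (·.bind P)^[N] (Measure.dirac x) = iter P N x := by
  induction N with
  | zero => rfl
  | succ N ih => rw [Function.iterate_succ_apply', ih, iter]

lemma isProbabilityMeasure_iter (hP : Measurable P) (hPprob : ∀ x, IsProbabilityMeasure (P x))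
    (N : ℕ) (x : X) : IsProbabilityMeasure (iter P N x) := by
  induction N with
  | zero => rw [iter]; infer_instance
  | succ N ih =>
    rw [iter]
    exact isProbabilityMeasure_bind hP.aemeasurable (ae_of_all _ hPprob)

variable (P π V ρ) in
def GeomApproach (μ : Measure X) (C : ℝ) : Prop :=
  ∀ (N : ℕ) (f : X → ℝ), Measurable f → (∀ y, |f y| ≤ V y) →
    Integrable f ((·.bind P)^[N] μ) ∧
      |∫ y, f y ∂((·.bind P)^[N] μ) - ∫ y, f y ∂π| ≤ C * ρ ^ N

lemma GeomApproach.bind {μ : Measure X} {C : ℝ} (h : GeomApproach P π V ρ μ C) :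
    GeomApproach P π V ρ (μ.bind P) (C * ρ) := by
  intro N f hf hfV
  rw [← Function.iterate_succ_apply, mul_assoc, ← pow_succ']
  exact h (N + 1) f hf hfV

lemma GeomApproach.average (hP : Measurable P) {n : ℕ} (hn : n ≠ 0) {μ : ℕ → Measure X}
    {C : ℕ → ℝ} (h : ∀ j < n, GeomApproach P π V ρ (μ j) (C j)) :
    GeomApproach P π V ρ ((n : ℝ≥0∞)⁻¹ • ∑ j ∈ Finset.range n, μ j)
      ((∑ j ∈ Finset.range n, C j) / n) := by
  intro N f hf hfV
  have hμ : ∀ j ∈ Finset.range n, _ := fun j hj ↦ h j (Finset.mem_range.1 hj) N f hf hfV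
  rw [iterate_bind_smul_sum hP]
  refine ⟨(integrable_finsetSum_measure.2 fun j hj ↦ (hμ j hj).1).smul_measure
    (ENNReal.inv_ne_top.2 (Nat.cast_ne_zero.2 hn)), ?_⟩
  have hnR : (0 : ℝ) < n := by exact_mod_cast Nat.pos_of_ne_zero hn
  rw [integral_smul_measure, integral_finsetSum_measure fun j hj ↦ (hμ j hj).1,
    ENNReal.toReal_inv, ENNReal.toReal_natCast, smul_eq_mul]
  calc |(n : ℝ)⁻¹ * ∑ j ∈ Finset.range n, ∫ y, f y ∂((·.bind P)^[N] (μ j)) - ∫ y, f y ∂π|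
      = |(n : ℝ)⁻¹ * ∑ j ∈ Finset.range n,
          (∫ y, f y ∂((·.bind P)^[N] (μ j)) - ∫ y, f y ∂π)| := by
        rw [Finset.sum_sub_distrib, Finset.sum_const, Finset.card_range, nsmul_eq_mul, mul_sub,
          inv_mul_cancel_left₀ hnR.ne']
    _ = (n : ℝ)⁻¹ * |∑ j ∈ Finset.range n,
          (∫ y, f y ∂((·.bind P)^[N] (μ j)) - ∫ y, f y ∂π)| := by
        rw [abs_mul, abs_of_pos (inv_pos.2 hnR)]
    _ ≤ (n : ℝ)⁻¹ * ∑ j ∈ Finset.range n, C j * ρ ^ N := by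
        gcongr
        exact (Finset.abs_sum_le_sum_abs _ _).trans (Finset.sum_le_sum fun j hj ↦ (hμ j hj).2)
    _ = (∑ j ∈ Finset.range n, C j) / n * ρ ^ N := by
        rw [← Finset.sum_mul]
        ring

lemma geomApproach_dirac (hP : Measurable P) (hPprob : ∀ x, IsProbabilityMeasure (P x))
    {C0 : ℝ} (hA : ∀ f : X → ℝ, Measurable f → (∀ x, |f x| ≤ V x) → ∀ (n : ℕ) (x : X),
      |∫ y, f y ∂(iter P n x) - ∫ y, f y ∂π| ≤ C0 * ρ ^ n * V x) (x : X) :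
    GeomApproach P π V ρ (Measure.dirac x) (C0 * V x) := by
  intro N f hf hfV
  rw [iterate_bind_dirac]
  refine ⟨?_, by simpa only [mul_right_comm] using hA f hf hfV N x⟩
  have := isProbabilityMeasure_iter hP hPprob N x
  refine integrable_of_integral_min_abs_le hf (B := V x + C0 * V x + C0 * ρ ^ N * V x)
    fun n ↦ ?_
  set g : X → ℝ := fun y ↦ min |f y| n
  have hg : Measurable g := hf.abs.min measurable_const
  have hgV : ∀ y, |g y| ≤ V y := fun y ↦ by
    rw [abs_of_nonneg (le_min (abs_nonneg _) n.cast_nonneg)]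
    exact (min_le_left _ _).trans (hfV y)
  have hN := abs_le.1 (hA g hg hgV N x)
  have h0 := abs_le.1 (hA g hg hgV 0 x)
  rw [iter, integral_dirac' _ _ hg.stronglyMeasurable, pow_zero, mul_one] at h0
  have := (le_abs_self _).trans (hgV x)
  linarith [hN.2, h0.1]

lemma geomApproach_resampling (hP : Measurable P) {B : X → ℝ}
    (hdirac : ∀ x, GeomApproach P π V ρ (Measure.dirac x) (B x)) {a : ℕ → ℕ}
    {L : ℕ → X → Measure X} (hL0 : ∀ x, L 0 x = Measure.dirac x)
    (hLstep : ∀ n : ℕ, 1 ≤ n → ¬IsResamplingTime a n → ∀ x, L n x = (L (n - 1) x).bind P)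
    (hLres : ∀ k, 1 ≤ k →
      ∀ x, L (a k) x = ((a k : ℝ≥0∞))⁻¹ • ∑ j ∈ Finset.range (a k), L j x)
    (n : ℕ) (x : X) : GeomApproach P π V ρ (L n x) (B x * errorFactor ρ a n) := by
  induction n using Nat.strong_induction_on with
  | _ n ih =>
    rcases n with _ | n
    · rw [hL0, errorFactor_zero, mul_one]
      exact hdirac x
    by_cases hres : IsResamplingTime a (n + 1)
    · have hC : B x * errorFactor ρ a (n + 1) =
          (∑ j ∈ Finset.range (n + 1), B x * errorFactor ρ a j) / (n + 1 : ℕ) := by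
        rw [errorFactor_succ_of_isResamplingTime hres, ← Finset.mul_sum]
        push_cast
        ring
      obtain ⟨k, hk, hak⟩ := hres
      rw [hC, ← hak, hLres k hk x]
      exact GeomApproach.average hP (by omega) fun j hj ↦ ih j (by omega)
    · rw [hLstep (n + 1) (by omega) hres x, Nat.add_sub_cancel,
        errorFactor_succ_of_not_isResamplingTime hres, mul_left_comm, mul_comm]
      exact (ih n n.lt_succ_self).bind

end Chain

theorem vnorm_bound_of_resampling_from_past_general
    (P : X → Measure X) (hPmeas : Measurable P)
    (hPprob : ∀ x, IsProbabilityMeasure (P x))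
    (π : Measure X)
    (V : X → ℝ) (hV1 : ∀ x, 1 ≤ V x)
    (ρ C0 : ℝ) (hρ0 : 0 < ρ) (hρ1 : ρ < 1) (hC0 : 0 ≤ C0)
    -- Assumption (A): `⦀P^n − π⦀_V ≤ C0 ρ^n` for all `n ≥ 0`
    (hA : ∀ f : X → ℝ, Measurable f → (∀ x, |f x| ≤ V x) →
      ∀ (n : ℕ) (x : X),
        |∫ y, f y ∂(iter P n x) - ∫ y, f y ∂π| ≤ C0 * ρ ^ n * V x)
    -- the resampling schedule: a strictly increasing sequence of positive integers
    (a : ℕ → ℕ) (ha1 : 1 ≤ a 1) (hamono : ∀ k, 1 ≤ k → a k < a (k + 1))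
    -- the laws `L^(n)(x,·)` of the chain with resampling from the past, burn-in 0
    (L : ℕ → X → Measure X)
    (hL0 : ∀ x, L 0 x = Measure.dirac x)
    (hLstep : ∀ n : ℕ, 1 ≤ n → (¬ ∃ k, 1 ≤ k ∧ a k = n) →
      ∀ x, L n x = (L (n - 1) x).bind P)
    (hLres : ∀ k, 1 ≤ k →
      ∀ x, L (a k) x = ((a k : ℝ≥0∞))⁻¹ • ∑ j ∈ Finset.range (a k), L j x) :
    ∃ C : ℝ, 0 < C ∧
      ∀ k n : ℕ, 1 ≤ k → a k ≤ n → n < a (k + 1) →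
        ∀ f : X → ℝ, Measurable f → (∀ x, |f x| ≤ V x) →
          ∀ x, |∫ y, f y ∂(L n x) - ∫ y, f y ∂π| ≤
            C * ρ ^ (n - a k) * Real.exp (-(delta ρ a k)) * V x := by
  set K := 1 / (1 - ρ) / (a 1 * ρ ^ a 1)
  have hK : 0 < K := by
    have : 0 < 1 - ρ := by linarith
    have : (0 : ℝ) < a 1 := by exact_mod_cast ha1
    positivity
  refine ⟨(C0 + 1) * K, by positivity, fun k n hk hkn hnk f hf hfV x ↦ ?_⟩
  obtain ⟨d, rfl⟩ := Nat.exists_eq_add_of_le hkn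
  have hL := (geomApproach_resampling hPmeas (geomApproach_dirac hPmeas hPprob hA) hL0 hLstep
    hLres (a k + d) x 0 f hf hfV).2
  rw [pow_zero, mul_one, errorFactor_add_eq_pow_mul fun i h₁ h₂ ↦
    not_isResamplingTime_of_lt_of_lt hamono hk h₁ (by omega)] at hL
  have hVx : 0 ≤ V x := zero_le_one.trans (hV1 x)
  calc |∫ y, f y ∂(L (a k + d) x) - ∫ y, f y ∂π|
      ≤ C0 * V x * (ρ ^ d * errorFactor ρ a (a k)) := hL
    _ ≤ C0 * V x * (ρ ^ d * (K * Real.exp (-delta ρ a k))) := by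
        gcongr
        exact errorFactor_a_le hρ0 hρ1 hamono ha1 hk
    _ = C0 * K * ρ ^ d * Real.exp (-delta ρ a k) * V x := by ring
    _ ≤ (C0 + 1) * K * ρ ^ (a k + d - a k) * Real.exp (-delta ρ a k) * V x := by
        rw [Nat.add_sub_cancel_left]
        gcongr
        linarith

/-- Under Assumption (A) (geometric ergodicity of `P` in `V`-norm, with
constants `ρ ∈ (0,1)`, `C0 < ∞`), there is a constant `C ∈ (0,∞)` such that for every `k ≥ 1`
and every `n` with `a_k ≤ n < a_{k+1}`, the law `L^(n)` of the chain with resampling from the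
past (burn-in `0`) satisfies `⦀L^(n) − π⦀_V ≤ C ρ^{n−a_k} exp(−δ_k)`.  The `V`-norm bound is
expressed by testing against all measurable `f` with `|f|_V ≤ 1`. -/
theorem vnorm_bound_of_resampling_from_past
    (P : X → Measure X) (hPmeas : Measurable P)
    (hPprob : ∀ x, IsProbabilityMeasure (P x))
    (π : Measure X) (hπ : IsProbabilityMeasure π) (hinv : π.bind P = π)
    (V : X → ℝ) (hVmeas : Measurable V) (hV1 : ∀ x, 1 ≤ V x)
    (ρ C0 : ℝ) (hρ0 : 0 < ρ) (hρ1 : ρ < 1) (hC0 : 0 ≤ C0)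
    -- Assumption (A): `⦀P^n − π⦀_V ≤ C0 ρ^n` for all `n ≥ 0`
    (hA : ∀ f : X → ℝ, Measurable f → (∀ x, |f x| ≤ V x) →
      ∀ (n : ℕ) (x : X),
        |∫ y, f y ∂(iter P n x) - ∫ y, f y ∂π| ≤ C0 * ρ ^ n * V x)
    -- the resampling schedule: a strictly increasing sequence of positive integers
    (a : ℕ → ℕ) (ha1 : 1 ≤ a 1) (hamono : ∀ k, 1 ≤ k → a k < a (k + 1))
    -- the laws `L^(n)(x,·)` of the chain with resampling from the past, burn-in 0
    (L : ℕ → X → Measure X)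
    (hL0 : ∀ x, L 0 x = Measure.dirac x)
    (hLstep : ∀ n : ℕ, 1 ≤ n → (¬ ∃ k, 1 ≤ k ∧ a k = n) →
      ∀ x, L n x = (L (n - 1) x).bind P)
    (hLres : ∀ k, 1 ≤ k →
      ∀ x, L (a k) x = ((a k : ℝ≥0∞))⁻¹ • ∑ j ∈ Finset.range (a k), L j x) :
    ∃ C : ℝ, 0 < C ∧
      ∀ k n : ℕ, 1 ≤ k → a k ≤ n → n < a (k + 1) →
        ∀ f : X → ℝ, Measurable f → (∀ x, |f x| ≤ V x) →
          ∀ x, |∫ y, f y ∂(L n x) - ∫ y, f y ∂π| ≤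
            C * ρ ^ (n - a k) * Real.exp (-(delta ρ a k)) * V x :=
  vnorm_bound_of_resampling_from_past_general P hPmeas hPprob π V hV1 ρ C0 hρ0 hρ1 hC0 hA a ha1
    hamono L hL0 hLstep hLres

end ResamplingFromThePast
end

section
/- Let ρ ∈ (0,1), c = 1/(1−ρ), b1 ≥ 0 an integer and α > 1, and define the resampling schedule a_k = b1 + ⌈k^α⌉ for k ≥ 1. Then the sequence δ_n = −a_1 log ρ + Σ_{k=2}^n [log(a_k) − log(c + a_{k−1})] tends to +∞ as n → ∞. -/
/-!
Since `log (c + x) ≤ log x + c / x`, each summand of `δ_n` is at least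
`log a_k - log a_{k-1} - c / a_{k-1}`. The logarithms telescope, so
`δ_n ≥ log a_n - C` with `C` controlled by `∑ 1 / a_k ≤ ∑ k^(-α) < ∞`,
and `log a_n → ∞`.
-/

open Filter Finset Real

lemma Real.log_add_le_log_add_div {x c : ℝ} (hx : 0 < x) (hcx : 0 < c + x) :
    log (c + x) ≤ log x + c / x := by
  have h := log_le_sub_one_of_pos (div_pos hcx hx)
  rw [log_div hcx.ne' hx.ne', add_div, div_self hx.ne'] at h
  linarith

section LogSum

variable {a : ℕ → ℕ} {c : ℝ}

lemma log_sub_log_sub_mul_sum_inv_le_sum_log_sub_log_add (hc : 0 ≤ c)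
    (hpos : ∀ k, 0 < k → 0 < a k) {n : ℕ} (hn : 1 ≤ n) :
    log (a n) - log (a 1) - c * ∑ j ∈ Ico 1 n, (a j : ℝ)⁻¹ ≤
      ∑ k ∈ Icc 2 n, (log (a k) - log (c + a (k - 1))) := by
  induction n, hn using Nat.le_induction with
  | base => simp
  | succ n hn ih =>
    have hx : (0 : ℝ) < a n := by exact_mod_cast hpos n hn
    have hlog := log_add_le_log_add_div hx (by positivity)
    rw [sum_Ico_succ_top hn, sum_Icc_succ_top (by omega), Nat.add_sub_cancel, mul_add]
    rw [div_eq_mul_inv] at hlog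
    linarith

lemma tendsto_natCast_atTop_of_summable_inv (hpos : ∀ k, 0 < k → 0 < a k)
    (hsum : Summable fun k ↦ (a k : ℝ)⁻¹) :
    Tendsto (fun k ↦ (a k : ℝ)) atTop atTop := by
  have hinv : Tendsto (fun k ↦ (a k : ℝ)⁻¹) atTop (nhdsWithin 0 (Set.Ioi 0)) := by
    refine tendsto_nhdsWithin_iff.2 ⟨hsum.tendsto_atTop_zero, ?_⟩
    filter_upwards [eventually_gt_atTop 0] with k hk
    exact inv_pos.2 (Nat.cast_pos (α := ℝ) |>.2 (hpos k hk))
  simpa only [Pi.inv_def, inv_inv] using hinv.inv_tendsto_nhdsGT_zero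

theorem tendsto_sum_log_sub_log_add_atTop (hc : 0 ≤ c) (hpos : ∀ k, 0 < k → 0 < a k)
    (hsum : Summable fun k ↦ (a k : ℝ)⁻¹) :
    Tendsto (fun n ↦ ∑ k ∈ Icc 2 n, (log (a k) - log (c + a (k - 1)))) atTop atTop := by
  set S := ∑' j, (a j : ℝ)⁻¹
  have hlower : Tendsto (fun n ↦ log (a n) + (-log (a 1) - c * S)) atTop atTop :=
    tendsto_atTop_add_const_right _ _
      (tendsto_log_atTop.comp (tendsto_natCast_atTop_of_summable_inv hpos hsum))
  refine tendsto_atTop_mono' atTop ?_ hlower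
  filter_upwards [eventually_ge_atTop 1] with n hn
  have hpartial : c * ∑ j ∈ Ico 1 n, (a j : ℝ)⁻¹ ≤ c * S :=
    mul_le_mul_of_nonneg_left (hsum.sum_le_tsum _ fun j _ ↦ by positivity) hc
  linarith [log_sub_log_sub_mul_sum_inv_le_sum_log_sub_log_add hc hpos hn]

end LogSum

section Schedule

variable (b : ℕ) {α : ℝ}

lemma add_ceil_rpow_pos {k : ℕ} (hk : 0 < k) : 0 < b + ⌈(k : ℝ) ^ α⌉₊ :=
  Nat.add_pos_right b (Nat.ceil_pos.2 (rpow_pos_of_pos (Nat.cast_pos.2 hk) α))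

lemma summable_inv_add_ceil_rpow (hα : 1 < α) :
    Summable fun k : ℕ ↦ ((b + ⌈(k : ℝ) ^ α⌉₊ : ℕ) : ℝ)⁻¹ := by
  refine (summable_nat_rpow_inv.2 hα).of_norm_bounded_eventually_nat ?_
  filter_upwards [eventually_gt_atTop 0] with k hk
  rw [norm_inv, Real.norm_natCast]
  refine inv_anti₀ (rpow_pos_of_pos (Nat.cast_pos.2 hk) α) ?_
  push_cast
  linarith [Nat.le_ceil ((k : ℝ) ^ α), (Nat.cast_nonneg b : (0 : ℝ) ≤ b)]

end Schedule

theorem delta_tendsto_atTop_of_polynomial_schedule_general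
    (ρ : ℝ) (hρ1 : ρ < 1)
    (b1 : ℕ) (α : ℝ) (hα : 1 < α)
    (a : ℕ → ℕ) (ha : ∀ k : ℕ, a k = b1 + ⌈(k : ℝ) ^ α⌉₊) :
    Tendsto
      (fun n : ℕ => -(a 1 : ℝ) * Real.log ρ +
        ∑ k ∈ Finset.Icc 2 n,
          (Real.log (a k : ℝ) - Real.log (1 / (1 - ρ) + (a (k - 1) : ℝ))))
      atTop atTop := by
  obtain rfl : a = fun k : ℕ ↦ b1 + ⌈(k : ℝ) ^ α⌉₊ := funext ha
  have hc : 0 ≤ 1 / (1 - ρ) := (one_div_pos.2 (sub_pos.2 hρ1)).le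
  exact tendsto_atTop_add_const_left _ _ <| tendsto_sum_log_sub_log_add_atTop hc
    (fun _ ↦ add_ceil_rpow_pos b1) (summable_inv_add_ceil_rpow b1 hα)

/-- Let `ρ ∈ (0,1)`, `c = 1/(1−ρ)`, `b1 ≥ 0` an integer and `α > 1`, and
define the resampling schedule `a_k = b1 + ⌈k^α⌉` for `k ≥ 1`.  Then
`δ_n = −a_1 log ρ + Σ_{k=2}^n [log(a_k) − log(c + a_{k−1})]` tends to `+∞` as `n → ∞`. -/
theorem delta_tendsto_atTop_of_polynomial_schedule
    (ρ : ℝ) (hρ0 : 0 < ρ) (hρ1 : ρ < 1)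
    (b1 : ℕ) (α : ℝ) (hα : 1 < α)
    (a : ℕ → ℕ) (ha : ∀ k : ℕ, a k = b1 + ⌈(k : ℝ) ^ α⌉₊) :
    Tendsto
      (fun n : ℕ => -(a 1 : ℝ) * Real.log ρ +
        ∑ k ∈ Finset.Icc 2 n,
          (Real.log (a k : ℝ) - Real.log (1 / (1 - ρ) + (a (k - 1) : ℝ))))
      atTop atTop :=
  delta_tendsto_atTop_of_polynomial_schedule_general ρ hρ1 b1 α hα a ha
end

section
/- Let ρ ∈ (0,1), c = 1/(1−ρ), b1 ≥ 0 an integer and b2 an integer with b2 > c, and define the resampling schedule a_k = b1 + b2 k for k ≥ 1. Then the sequence δ_n = −a_1 log ρ + Σ_{k=2}^n [log(a_k) − log(c + a_{k−1})] tends to +∞ as n → ∞. -/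
open Filter

/-!
Since `b₂ > c`, the `k`-th summand `log (b₁ + b₂ k) - log (c + b₁ + b₂ (k - 1))` is the log of a
ratio whose numerator exceeds the denominator by the fixed amount `b₂ - c`; by `log t ≥ 1 - 1/t`
it is at least `(b₂ - c) / (b₁ + b₂ k) ≥ D / k` with `D = (b₂ - c) / (b₁ + b₂) > 0`.
So `δ_n` dominates a constant plus `D` times a tail of the harmonic series, which diverges.
-/

namespace Real

theorem sub_div_le_log_sub_log {x y : ℝ} (hx : 0 < x) (hy : 0 < y) :
    (x - y) / x ≤ log x - log y := by
  have h := one_sub_inv_le_log_of_pos (div_pos hx hy)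
  rwa [log_div hx.ne' hy.ne', inv_div, one_sub_div hx.ne'] at h

end Real

theorem tendsto_sum_Icc_atTop_of_not_summable {g : ℕ → ℝ} (hg : ∀ k, 0 ≤ g k)
    (hs : ¬Summable g) (m : ℕ) :
    Tendsto (fun n => ∑ k ∈ Finset.Icc m n, g k) atTop atTop := by
  have hrange := ((not_summable_iff_tendsto_nat_atTop_of_nonneg hg).mp hs).comp
    (tendsto_add_atTop_nat 1)
  refine (tendsto_atTop_add_const_right _ (-∑ k ∈ Finset.range m, g k) hrange).congr' ?_
  filter_upwards [eventually_ge_atTop m] with n hn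
  rw [← Finset.Ico_add_one_right_eq_Icc, Finset.sum_Ico_eq_sub _ (by omega)]
  simp only [Function.comp_apply, sub_eq_add_neg]

theorem tendsto_sum_Icc_atTop_of_div_le {f : ℕ → ℝ} {D : ℝ} (hD : 0 < D) (m : ℕ)
    (hf : ∀ k, m ≤ k → D / k ≤ f k) :
    Tendsto (fun n => ∑ k ∈ Finset.Icc m n, f k) atTop atTop := by
  have hs : ¬Summable fun k : ℕ => D / k := by
    simpa only [mul_one_div] using
      (summable_mul_left_iff hD.ne').not.mpr Real.not_summable_one_div_natCast
  refine tendsto_atTop_mono (fun n => Finset.sum_le_sum fun k hk => ?_)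
    (tendsto_sum_Icc_atTop_of_not_summable (fun k => by positivity) hs m)
  exact hf k (Finset.mem_Icc.mp hk).1

theorem div_le_log_sub_log_of_linear {b₁ b₂ c k : ℝ} (hb₁ : 0 ≤ b₁) (hc : 0 < c)
    (hcb : c < b₂) (hk : 1 ≤ k) :
    (b₂ - c) / (b₁ + b₂) / k ≤ Real.log (b₁ + b₂ * k) - Real.log (c + (b₁ + b₂ * (k - 1))) := by
  have hx : 0 < b₁ + b₂ * k := by nlinarith
  have hy : 0 < c + (b₁ + b₂ * (k - 1)) := by nlinarith
  calc (b₂ - c) / (b₁ + b₂) / k = (b₂ - c) / ((b₁ + b₂) * k) := div_div _ _ _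
    _ ≤ (b₂ - c) / (b₁ + b₂ * k) :=
        div_le_div_of_nonneg_left (by linarith) hx (by nlinarith)
    _ = (b₁ + b₂ * k - (c + (b₁ + b₂ * (k - 1)))) / (b₁ + b₂ * k) := by ring_nf
    _ ≤ _ := Real.sub_div_le_log_sub_log hx hy

theorem delta_tendsto_atTop_of_linear_schedule_general
    (ρ : ℝ) (hρ1 : ρ < 1)
    (b1 b2 : ℕ) (hb2 : 1 / (1 - ρ) < (b2 : ℝ))
    (a : ℕ → ℕ) (ha : ∀ k : ℕ, a k = b1 + b2 * k) :
    Tendsto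
      (fun n : ℕ => -(a 1 : ℝ) * Real.log ρ +
        ∑ k ∈ Finset.Icc 2 n,
          (Real.log (a k : ℝ) - Real.log (1 / (1 - ρ) + (a (k - 1) : ℝ))))
      atTop atTop := by
  have hc : 0 < 1 / (1 - ρ) := one_div_pos.mpr (sub_pos.mpr hρ1)
  have hD : 0 < ((b2 : ℝ) - 1 / (1 - ρ)) / (b1 + b2) := div_pos (sub_pos.mpr hb2) (by linarith)
  refine tendsto_atTop_add_const_left _ _ (tendsto_sum_Icc_atTop_of_div_le hD 2 fun k hk => ?_)
  have hk1 : (1 : ℝ) ≤ k := by exact_mod_cast (by omega : 1 ≤ k)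
  simpa only [ha, Nat.cast_add, Nat.cast_mul, Nat.cast_sub (by omega : 1 ≤ k), Nat.cast_one] using
    div_le_log_sub_log_of_linear (Nat.cast_nonneg b1) hc hb2 hk1

/-- Let `ρ ∈ (0,1)`, `c = 1/(1−ρ)`, `b1 ≥ 0` an integer and `b2` an integer
with `b2 > c`, and define the resampling schedule `a_k = b1 + b2 k` for `k ≥ 1`.  Then
`δ_n = −a_1 log ρ + Σ_{k=2}^n [log(a_k) − log(c + a_{k−1})]` tends to `+∞` as `n → ∞`. -/
theorem delta_tendsto_atTop_of_linear_schedule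
    (ρ : ℝ) (hρ0 : 0 < ρ) (hρ1 : ρ < 1)
    (b1 b2 : ℕ) (hb2 : 1 / (1 - ρ) < (b2 : ℝ))
    (a : ℕ → ℕ) (ha : ∀ k : ℕ, a k = b1 + b2 * k) :
    Tendsto
      (fun n : ℕ => -(a 1 : ℝ) * Real.log ρ +
        ∑ k ∈ Finset.Icc 2 n,
          (Real.log (a k : ℝ) - Real.log (1 / (1 - ρ) + (a (k - 1) : ℝ))))
      atTop atTop :=
  delta_tendsto_atTop_of_linear_schedule_general ρ hρ1 b1 b2 hb2 a ha
end
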